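/- arXiv:2408.14182 — 2 statements merged into one kernel-verified Lean document; each statement's English description precedes it below -/
import Mathlib

section
/- For every integer n ≥ 1, one has −1/W(n) ≤ E_n/E_{n−1} − e^{W(n)} ≤ 0. -/
/-- Principal branch of the Lambert W function on `[0, ∞)`: for `x ≥ 0`,
`lambertW x` is the unique `y ≥ 0` with `y * exp y = x`. -/
noncomputable def lambertW (x : ℝ) : ℝ := Function.invFun (fun y : ℝ => y * Real.exp y) x

/-- `E n = n! * exp(e^R - 1) / (R^n * sqrt(2π(n+1)(R+1)))` with `R = W(n+1)`. -/
noncomputable def E (n : ℕ) : ℝ :=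
  (Nat.factorial n : ℝ) * Real.exp (Real.exp (lambertW (n + 1)) - 1) /
    ((lambertW (n + 1)) ^ n * Real.sqrt (2 * Real.pi * (n + 1) * (lambertW (n + 1) + 1)))

/-!
Writing `E n = n! * exp ψ(n + 1)` with `ψ = logEDivFactorial`, the ratio `E n / E (n - 1)` is
`n * exp (ψ(n + 1) - ψ(n))`, while `exp (W n) = n / W n`; so the claim is
`log ((n - 1) / n) - log (W n) ≤ ψ(n + 1) - ψ(n) ≤ -log (W n)`.
From `W' = W / (x (1 + W))` one gets `ψ' = -log W + (1 - W - W²) / (2x (1 + W)²)`, whose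
rational part lies in `[-1/(2x), 0]` as soon as `W ≥ 7/10`, i.e. for `x ≥ 3/2`. The mean value
theorem then gives the upper bound, and the lower bound follows from
`log W(n + 1) - log W(n) ≤ 1 / (n (1 + W n))` (convexity of `y e^y`) together with
`1 / (n (1 + W n)) + 1 / (2n) ≤ log (n / (n - 1))`.
-/
open Real Set Filter
open scoped Nat

lemma strictMonoOn_mul_exp : StrictMonoOn (fun y : ℝ => y * exp y) (Ici 0) :=
  fun a _ _ hb hab => mul_lt_mul hab (exp_le_exp.2 hab.le) (exp_pos a) hb

lemma lambertW_mul_exp {x : ℝ} (hx : 0 ≤ x) : lambertW x * exp (lambertW x) = x := by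
  obtain ⟨y, -, hy⟩ := intermediate_value_Icc hx (continuous_id.mul continuous_exp).continuousOn
    (show x ∈ Icc (0 * exp 0) (x * exp x) from
      ⟨by simpa using hx, le_mul_of_one_le_right hx (one_le_exp hx)⟩)
  exact Function.invFun_eq (f := fun y : ℝ => y * exp y) ⟨y, hy⟩

lemma lambertW_nonneg {x : ℝ} (hx : 0 ≤ x) : 0 ≤ lambertW x :=
  nonneg_of_mul_nonneg_left ((lambertW_mul_exp hx).symm ▸ hx) (exp_pos _)

lemma lambertW_pos {x : ℝ} (hx : 0 < x) : 0 < lambertW x := by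
  refine (lambertW_nonneg hx.le).lt_of_ne fun h => hx.ne ?_
  rw [← lambertW_mul_exp hx.le, ← h, zero_mul]

lemma lambertW_mul_exp_self {y : ℝ} (hy : 0 ≤ y) : lambertW (y * exp y) = y :=
  strictMonoOn_mul_exp.injOn (lambertW_nonneg (by positivity)) hy
    (lambertW_mul_exp (by positivity))

lemma le_lambertW_iff {x y : ℝ} (hx : 0 ≤ x) (hy : 0 ≤ y) :
    y ≤ lambertW x ↔ y * exp y ≤ x := by
  conv_rhs => rw [← lambertW_mul_exp hx]
  exact (strictMonoOn_mul_exp.le_iff_le hy (lambertW_nonneg hx)).symm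

lemma lambertW_le_iff {x y : ℝ} (hx : 0 ≤ x) (hy : 0 ≤ y) :
    lambertW x ≤ y ↔ x ≤ y * exp y := by
  conv_rhs => rw [← lambertW_mul_exp hx]
  exact (strictMonoOn_mul_exp.le_iff_le (lambertW_nonneg hx) hy).symm

lemma lambertW_le_lambertW {x y : ℝ} (hx : 0 ≤ x) (hxy : x ≤ y) : lambertW x ≤ lambertW y :=
  (le_lambertW_iff (hx.trans hxy) (lambertW_nonneg hx)).2 ((lambertW_mul_exp hx).trans_le hxy)

lemma lambertW_monotoneOn : MonotoneOn lambertW (Ici 0) :=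
  fun _ hx _ _ hxy => lambertW_le_lambertW hx hxy

lemma exp_lambertW {x : ℝ} (hx : 0 < x) : exp (lambertW x) = x / lambertW x := by
  rw [eq_div_iff (lambertW_pos hx).ne', mul_comm, lambertW_mul_exp hx.le]

lemma continuousAt_lambertW {x : ℝ} (hx : 0 < x) : ContinuousAt lambertW x := by
  refine continuousAt_of_monotoneOn_of_image_mem_nhds (lambertW_monotoneOn.mono Ioi_subset_Ici_self)
    (Ioi_mem_nhds hx) (mem_of_superset (Ioi_mem_nhds (lambertW_pos hx)) fun y hy => ?_)
  exact ⟨y * exp y, mul_pos hy (exp_pos y), lambertW_mul_exp_self (le_of_lt hy)⟩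

lemma hasDerivAt_lambertW {x : ℝ} (hx : 0 < x) :
    HasDerivAt lambertW (lambertW x / (x * (1 + lambertW x))) x := by
  have hW := lambertW_pos hx
  have hf : HasDerivAt (fun y => y * exp y) ((1 + lambertW x) * exp (lambertW x)) (lambertW x) := by
    have := (hasDerivAt_id' (lambertW x)).fun_mul (hasDerivAt_exp (lambertW x))
    rwa [one_mul, ← one_add_mul] at this
  have hW' : lambertW x / (x * (1 + lambertW x)) = ((1 + lambertW x) * exp (lambertW x))⁻¹ := by
    rw [exp_lambertW hx]
    field_simp
  rw [hW']
  exact hf.of_local_left_inverse (continuousAt_lambertW hx) (by positivity)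
    (eventually_of_mem (Ioi_mem_nhds hx) fun y hy => lambertW_mul_exp (le_of_lt hy))

lemma sub_mul_le_mul_exp_sub_mul_exp {a b : ℝ} (hb : 0 ≤ b) :
    (b - a) * ((1 + a) * exp a) ≤ b * exp b - a * exp a := by
  have hexp : exp b = exp a * exp (b - a) := by rw [← exp_add, add_sub_cancel]
  have htangent : b * (exp a * (b - a + 1)) ≤ b * exp b :=
    hexp ▸ mul_le_mul_of_nonneg_left
      (mul_le_mul_of_nonneg_left (add_one_le_exp _) (exp_pos a).le) hb
  nlinarith [mul_nonneg (sq_nonneg (b - a)) (exp_pos a).le]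

lemma log_lambertW_sub_log_lambertW_le {x y : ℝ} (hx : 0 < x) (hxy : x ≤ y) :
    log (lambertW y) - log (lambertW x) ≤ (y - x) / (x * (1 + lambertW x)) := by
  set a := lambertW x
  set b := lambertW y
  have ha : 0 < a := lambertW_pos hx
  have hxa : a * exp a = x := lambertW_mul_exp hx.le
  have hgrowth := sub_mul_le_mul_exp_sub_mul_exp (a := a) (lambertW_nonneg (hx.le.trans hxy))
  rw [hxa, lambertW_mul_exp (hx.le.trans hxy)] at hgrowth
  have hlog : log b - log a ≤ (b - a) / a := by
    have := log_le_sub_one_of_pos (div_pos (lambertW_pos (hx.trans_le hxy)) ha)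
    rwa [log_div (lambertW_pos (hx.trans_le hxy)).ne' ha.ne', div_sub_one ha.ne'] at this
  refine hlog.trans ((div_le_div_iff₀ ha (by positivity)).2 ?_)
  calc (b - a) * (x * (1 + a)) = a * ((b - a) * ((1 + a) * exp a)) := by rw [← hxa]; ring
    _ ≤ a * (y - x) := mul_le_mul_of_nonneg_left hgrowth ha.le
    _ = (y - x) * a := mul_comm _ _

lemma one_le_lambertW {x : ℝ} (hx : exp 1 ≤ x) : 1 ≤ lambertW x :=
  (le_lambertW_iff ((exp_pos 1).le.trans hx) zero_le_one).2 (by rwa [one_mul])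

lemma half_le_lambertW_one : 1 / 2 ≤ lambertW 1 := by
  refine (le_lambertW_iff zero_le_one (by norm_num)).2 ?_
  have hsq : exp (1 / 2) ^ 2 = exp 1 := by rw [← exp_nat_mul]; norm_num
  nlinarith [exp_one_lt_d9, exp_pos (1 / 2)]

lemma lambertW_one_le : lambertW 1 ≤ 3 / 5 := by
  refine (lambertW_le_iff zero_le_one (by norm_num)).2 ?_
  nlinarith [quadratic_le_exp_of_nonneg (show (0 : ℝ) ≤ 3 / 5 by norm_num)]

lemma seven_tenths_le_lambertW_three_halves : 7 / 10 ≤ lambertW (3 / 2) := by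
  refine (le_lambertW_iff (by norm_num) (by norm_num)).2 ?_
  have := exp_bound' (x := 7 / 10) (by norm_num) (by norm_num) (n := 4) (by norm_num)
  norm_num [Finset.sum_range_succ, Nat.factorial] at this
  linarith

lemma one_div_le_log_sub_log_sub_one {x : ℝ} (hx : 1 < x) : 1 / x ≤ log x - log (x - 1) := by
  have h := one_sub_inv_le_log_of_pos
    (div_pos (by linarith : (0 : ℝ) < x) (by linarith : (0 : ℝ) < x - 1))
  rw [log_div (by linarith) (by linarith), inv_div] at h
  convert h using 1
  field_simp
  ring

noncomputable def logEDivFactorial (x : ℝ) : ℝ :=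
  exp (lambertW x) - 1 - (x - 1) * log (lambertW x) - log (2 * π * x * (lambertW x + 1)) / 2

noncomputable def logEDivFactorialDeriv (x : ℝ) : ℝ :=
  -log (lambertW x) + (1 - lambertW x - lambertW x ^ 2) / (2 * x * (1 + lambertW x) ^ 2)

lemma E_eq_factorial_mul_exp (n : ℕ) : E n = (n ! : ℝ) * exp (logEDivFactorial (n + 1)) := by
  have hR : 0 < lambertW (n + 1) := lambertW_pos (by positivity)
  have hA : 0 < 2 * π * (n + 1) * (lambertW (n + 1) + 1) := by positivity
  have hsqrt : √(2 * π * (n + 1) * (lambertW (n + 1) + 1)) =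
      exp (log (2 * π * (n + 1) * (lambertW (n + 1) + 1)) / 2) := by
    rw [← log_sqrt hA.le, exp_log (sqrt_pos.2 hA)]
  rw [E, logEDivFactorial, add_sub_cancel_right, exp_sub (_ - _ * _), exp_sub (_ - 1) (_ * _),
    exp_nat_mul, exp_log hR, hsqrt]
  field_simp

lemma hasDerivAt_logEDivFactorial {x : ℝ} (hx : 0 < x) :
    HasDerivAt logEDivFactorial (logEDivFactorialDeriv x) x := by
  have hW := lambertW_pos hx
  have hW' := hasDerivAt_lambertW hx
  have hexp := hW'.exp.sub_const 1
  have hlogW := ((hasDerivAt_id' x).sub_const 1).fun_mul (hW'.log hW.ne')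
  have hlogProd := ((((hasDerivAt_id' x).const_mul (2 * π)).fun_mul (hW'.add_const 1)).log
    (by positivity)).div_const 2
  refine ((hexp.fun_sub hlogW).fun_sub hlogProd).congr_deriv ?_
  rw [logEDivFactorialDeriv, exp_lambertW hx]
  field_simp
  ring

lemma continuousOn_logEDivFactorial : ContinuousOn logEDivFactorial (Ioi 0) :=
  fun _ hx => (hasDerivAt_logEDivFactorial hx).continuousAt.continuousWithinAt

lemma differentiableOn_logEDivFactorial : DifferentiableOn ℝ logEDivFactorial (Ioi 0) :=
  fun _ hx => (hasDerivAt_logEDivFactorial hx).differentiableAt.differentiableWithinAt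

lemma logEDivFactorial_sub_le {a b C : ℝ} (ha : 0 < a) (hab : a ≤ b)
    (hC : ∀ x ∈ Ioo a b, logEDivFactorialDeriv x ≤ C) :
    logEDivFactorial b - logEDivFactorial a ≤ C * (b - a) := by
  have hsub : Icc a b ⊆ Ioi 0 := fun x hx => ha.trans_le hx.1
  refine (convex_Icc a b).image_sub_le_mul_sub_of_deriv_le
    (continuousOn_logEDivFactorial.mono hsub)
    (differentiableOn_logEDivFactorial.mono (interior_subset.trans hsub)) (fun x hx => ?_)
    a (left_mem_Icc.2 hab) b (right_mem_Icc.2 hab) hab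
  rw [interior_Icc] at hx
  rw [(hasDerivAt_logEDivFactorial (ha.trans hx.1)).deriv]
  exact hC x hx

lemma le_logEDivFactorial_sub {a b C : ℝ} (ha : 0 < a) (hab : a ≤ b)
    (hC : ∀ x ∈ Ioo a b, C ≤ logEDivFactorialDeriv x) :
    C * (b - a) ≤ logEDivFactorial b - logEDivFactorial a := by
  have hsub : Icc a b ⊆ Ioi 0 := fun x hx => ha.trans_le hx.1
  refine (convex_Icc a b).mul_sub_le_image_sub_of_le_deriv
    (continuousOn_logEDivFactorial.mono hsub)
    (differentiableOn_logEDivFactorial.mono (interior_subset.trans hsub)) (fun x hx => ?_)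
    a (left_mem_Icc.2 hab) b (right_mem_Icc.2 hab) hab
  rw [interior_Icc] at hx
  rw [(hasDerivAt_logEDivFactorial (ha.trans hx.1)).deriv]
  exact hC x hx

lemma logEDivFactorialDeriv_le_neg_log {x : ℝ} (hx : 0 < x) (hW : 7 / 10 ≤ lambertW x) :
    logEDivFactorialDeriv x ≤ -log (lambertW x) := by
  have : (1 - lambertW x - lambertW x ^ 2) / (2 * x * (1 + lambertW x) ^ 2) ≤ 0 :=
    div_nonpos_of_nonpos_of_nonneg (by nlinarith) (by positivity)
  rw [logEDivFactorialDeriv]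
  linarith

lemma logEDivFactorialDeriv_le_of_one_le {x : ℝ} (hx : 1 ≤ x) :
    logEDivFactorialDeriv x ≤ -log (lambertW x) + 1 / 18 := by
  have hW : 1 / 2 ≤ lambertW x :=
    half_le_lambertW_one.trans (lambertW_le_lambertW zero_le_one hx)
  have : (1 - lambertW x - lambertW x ^ 2) / (2 * x * (1 + lambertW x) ^ 2) ≤ 1 / 18 := by
    rw [div_le_iff₀ (by positivity)]
    nlinarith [mul_nonneg (sub_nonneg.2 hx) (sq_nonneg (1 + lambertW x))]
  rw [logEDivFactorialDeriv]
  linarith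

lemma neg_log_sub_le_logEDivFactorialDeriv {x : ℝ} (hx : 0 < x) :
    -log (lambertW x) - 1 / (2 * x) ≤ logEDivFactorialDeriv x := by
  have hW := lambertW_nonneg hx.le
  have : -(1 / (2 * x)) ≤ (1 - lambertW x - lambertW x ^ 2) / (2 * x * (1 + lambertW x) ^ 2) := by
    rw [neg_div', div_le_div_iff₀ (by positivity) (by positivity)]
    nlinarith
  rw [logEDivFactorialDeriv]
  linarith

lemma logEDivFactorial_sub_le_of_three_halves_le {a b : ℝ} (ha : 3 / 2 ≤ a) (hab : a ≤ b) :
    logEDivFactorial b - logEDivFactorial a ≤ -log (lambertW a) * (b - a) := by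
  refine logEDivFactorial_sub_le (by linarith) hab fun x hx => ?_
  have hWa : 7 / 10 ≤ lambertW a :=
    seven_tenths_le_lambertW_three_halves.trans (lambertW_le_lambertW (by norm_num) ha)
  have hWx : lambertW a ≤ lambertW x :=
    lambertW_le_lambertW (by linarith) hx.1.le
  refine (logEDivFactorialDeriv_le_neg_log (by linarith [hx.1]) (hWa.trans hWx)).trans ?_
  exact neg_le_neg (log_le_log (by linarith) hWx)

lemma logEDivFactorial_sub_le_of_one_le {a b : ℝ} (ha : 1 ≤ a) (hab : a ≤ b) :
    logEDivFactorial b - logEDivFactorial a ≤ (-log (lambertW a) + 1 / 18) * (b - a) := by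
  refine logEDivFactorial_sub_le (by linarith) hab fun x hx => ?_
  have hWx : lambertW a ≤ lambertW x :=
    lambertW_le_lambertW (by linarith) hx.1.le
  refine (logEDivFactorialDeriv_le_of_one_le (by linarith [hx.1])).trans ?_
  linarith [log_le_log (lambertW_pos (by linarith)) hWx]

/- The rational part of `ψ'` is positive near `x = 1`; on `[1, 3/2]` it is at most `1/18`, which
the growth of `log W` over `[1, 3/2]` absorbs. -/
lemma logEDivFactorial_two_sub_one_le :
    logEDivFactorial 2 - logEDivFactorial 1 ≤ -log (lambertW 1) := by
  have h₁ := logEDivFactorial_sub_le_of_one_le le_rfl (by norm_num : (1 : ℝ) ≤ 3 / 2)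
  have h₂ := logEDivFactorial_sub_le_of_three_halves_le le_rfl (by norm_num : (3 / 2 : ℝ) ≤ 2)
  have hW₁ := lambertW_pos one_pos
  have hgap : 1 / 7 ≤ log (lambertW (3 / 2)) - log (lambertW 1) := by
    have hW₂ := seven_tenths_le_lambertW_three_halves
    have := log_le_sub_one_of_pos (div_pos hW₁ (by linarith : 0 < lambertW (3 / 2)))
    rw [log_div hW₁.ne' (by linarith)] at this
    have : lambertW 1 / lambertW (3 / 2) ≤ 6 / 7 := by
      rw [div_le_iff₀ (by linarith)]; linarith [lambertW_one_le]
    linarith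
  linarith

lemma logEDivFactorial_succ_sub_le {n : ℕ} (hn : 1 ≤ n) :
    logEDivFactorial (n + 1) - logEDivFactorial n ≤ -log (lambertW n) := by
  rcases hn.eq_or_lt with rfl | hn
  · norm_num
    linarith [logEDivFactorial_two_sub_one_le]
  · have hn : (2 : ℝ) ≤ n := by exact_mod_cast hn
    simpa using logEDivFactorial_sub_le_of_three_halves_le (by linarith)
      (by linarith : (n : ℝ) ≤ n + 1)

lemma logEDivFactorial_add_one_sub_ge {x : ℝ} (hx : 0 < x) :
    -log (lambertW x) - 1 / (x * (1 + lambertW x)) - 1 / (2 * x) ≤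
      logEDivFactorial (x + 1) - logEDivFactorial x := by
  have hxx : x ≤ x + 1 := by linarith
  have hlogW := log_lambertW_sub_log_lambertW_le hx hxx
  have hincr := le_logEDivFactorial_sub hx hxx (C := -log (lambertW (x + 1)) - 1 / (2 * x))
    fun ξ hξ => by
      have hξ₀ : 0 < ξ := hx.trans hξ.1
      have hderiv := neg_log_sub_le_logEDivFactorialDeriv hξ₀
      have hlog := log_le_log (lambertW_pos hξ₀) (lambertW_le_lambertW hξ₀.le hξ.2.le)
      have hinv : 1 / (2 * ξ) ≤ 1 / (2 * x) := by gcongr; exact hξ.1.le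
      linarith
  rw [add_sub_cancel_left] at hlogW hincr
  linarith

lemma log_sub_log_sub_log_lambertW_le {n : ℕ} (hn : 2 ≤ n) :
    log (n - 1) - log n - log (lambertW n) ≤ logEDivFactorial (n + 1) - logEDivFactorial n := by
  have hn₂ : (2 : ℝ) ≤ n := by exact_mod_cast hn
  suffices 1 / (n * (1 + lambertW n)) + 1 / (2 * n) ≤ log n - log (n - 1) by
    linarith [logEDivFactorial_add_one_sub_ge (by linarith : (0 : ℝ) < n)]
  rcases hn.eq_or_lt with rfl | hn
  · have hW : 7 / 10 ≤ lambertW 2 :=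
      seven_tenths_le_lambertW_three_halves.trans (lambertW_le_lambertW (by norm_num) (by norm_num))
    have : 1 / (2 * (1 + lambertW 2)) ≤ 1 / (2 * (1 + 7 / 10)) := by gcongr
    norm_num at this ⊢
    linarith [log_two_gt_d9]
  · have hn₃ : (3 : ℝ) ≤ n := by exact_mod_cast hn
    have hW : 1 ≤ lambertW n := one_le_lambertW (by linarith [exp_one_lt_d9])
    have hfirst : 1 / (n * (1 + lambertW n)) ≤ 1 / (2 * n) :=
      one_div_le_one_div_of_le (by positivity) (by nlinarith)
    have hhalves : 1 / (2 * n) + 1 / (2 * n) = 1 / (n : ℝ) := by ring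
    linarith [one_div_le_log_sub_log_sub_one (by linarith : (1 : ℝ) < n)]

lemma E_div_E_sub_one {n : ℕ} (hn : 1 ≤ n) :
    E n / E (n - 1) = n * exp (logEDivFactorial (n + 1) - logEDivFactorial n) := by
  obtain ⟨m, rfl⟩ := Nat.exists_eq_add_of_le' hn
  rw [Nat.add_sub_cancel, E_eq_factorial_mul_exp, E_eq_factorial_mul_exp, Nat.factorial_succ,
    exp_sub]
  push_cast
  field_simp

theorem stmt_9 (n : ℕ) (hn : 1 ≤ n) :
    -1 / lambertW n ≤ E n / E (n - 1) - Real.exp (lambertW n) ∧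
      E n / E (n - 1) - Real.exp (lambertW n) ≤ 0 := by
  have hn₀ : (0 : ℝ) < n := by exact_mod_cast hn
  have hW := lambertW_pos hn₀
  rw [E_div_E_sub_one hn, exp_lambertW hn₀]
  constructor
  · suffices (n - 1) / lambertW n ≤ n * exp (logEDivFactorial (n + 1) - logEDivFactorial n) by
      have : (n - 1) / lambertW n = n / lambertW n + -1 / lambertW n := by ring
      linarith
    rcases hn.eq_or_lt with rfl | hn
    · simpa using (exp_pos _).le
    · have hn₁ : (0 : ℝ) < n - 1 := sub_pos.2 (by exact_mod_cast hn)
      calc (n - 1) / lambertW n = n * exp (log (n - 1) - log n - log (lambertW n)) := by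
            rw [exp_sub, exp_sub, exp_log hn₁, exp_log hn₀, exp_log hW]
            field_simp
        _ ≤ n * exp (logEDivFactorial (n + 1) - logEDivFactorial n) := by
            gcongr n * exp ?_
            exact log_sub_log_sub_log_lambertW_le hn
  · refine sub_nonpos.2 ?_
    calc n * exp (logEDivFactorial (n + 1) - logEDivFactorial n)
        ≤ n * exp (-log (lambertW n)) := by
          gcongr n * exp ?_
          exact logEDivFactorial_succ_sub_le hn
      _ = n / lambertW n := by rw [exp_neg, exp_log hW, div_eq_mul_inv]
end

section
/- The sequence B_n^{1/n} / ((1/e)·n/ln n) converges to 1 as n → ∞. -/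
/-- Bell numbers: `Bell 0 = 1` and `Bell (n+1) = ∑_{k=0}^{n} C(n,k) * Bell k`. -/
def Bell : ℕ → ℕ
  | 0 => 1
  | n + 1 => ∑ k ∈ (Finset.range (n + 1)).attach, (n.choose k.1) * Bell k.1
decreasing_by exact Finset.mem_range.mp k.2

/-!
Dobinski's formula `e · B_n = ∑ₖ kⁿ / k!` gives both bounds. The single term `k = ⌈n / log n⌉` bounds `e · B_n`
from below. For the upper bound, `e a k ≤ exp (a k)` compares the series termwise with that of
`exp (exp (a n))`, so `(e a)ⁿ · e · B_n ≤ exp (exp (a n))`; choosing `exp (a n) = n / log n`, both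
bounds give `log B_n / n = log (n / (e log n)) + o(1)`.
-/

open Real Filter Finset
open scoped Nat Topology

lemma Bell_succ (n : ℕ) : Bell (n + 1) = ∑ i ∈ range (n + 1), n.choose i * Bell i := by
  rw [Bell]
  exact sum_attach (range (n + 1)) fun i => n.choose i * Bell i

lemma Real.hasSum_pow_div_factorial (x : ℝ) : HasSum (fun k => x ^ k / k !) (exp x) :=
  exp_eq_exp_ℝ ▸ NormedSpace.expSeries_div_hasSum_exp x

lemma cast_succ_pow_succ_div_factorial_succ (n k : ℕ) :
    ((k + 1 : ℕ) : ℝ) ^ (n + 1) / (k + 1)! = ((k : ℝ) + 1) ^ n / k ! := by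
  rw [Nat.factorial_succ, Nat.cast_mul, pow_succ]
  push_cast
  field_simp

theorem hasSum_pow_div_factorial_Bell (n : ℕ) :
    HasSum (fun k : ℕ => (k : ℝ) ^ n / k !) (exp 1 * Bell n) := by
  induction n using Nat.strong_induction_on with
  | _ n ih =>
  cases n with
  | zero => simpa [Bell] using Real.hasSum_pow_div_factorial 1
  | succ n =>
    have binomial : HasSum (fun k : ℕ => ∑ i ∈ range (n + 1), n.choose i * ((k : ℝ) ^ i / k !))
        (∑ i ∈ range (n + 1), n.choose i * (exp 1 * Bell i)) :=
      hasSum_sum fun i hi => (ih i (mem_range.mp hi)).mul_left _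
    have shifted : HasSum (fun k : ℕ => ((k + 1 : ℕ) : ℝ) ^ (n + 1) / (k + 1)!)
        (exp 1 * Bell (n + 1)) := by
      convert binomial using 1
      · funext k
        rw [cast_succ_pow_succ_div_factorial_succ, add_pow, sum_div]
        refine sum_congr rfl fun i _ => ?_
        ring
      · rw [Bell_succ, Nat.cast_sum, mul_sum]
        refine sum_congr rfl fun i _ => ?_
        push_cast; ring
    have := shifted.zero_add (f := fun k : ℕ => (k : ℝ) ^ (n + 1) / k !)
    rwa [Nat.cast_zero, zero_pow n.succ_ne_zero, zero_div, zero_add] at this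

lemma pow_div_factorial_le_exp_one_mul_Bell (n k : ℕ) : (k : ℝ) ^ n / k ! ≤ exp 1 * Bell n :=
  le_hasSum (hasSum_pow_div_factorial_Bell n) k fun _ _ => by positivity

lemma Bell_pos (n : ℕ) : 0 < Bell n := by
  have h := pow_div_factorial_le_exp_one_mul_Bell n 1
  rw [Nat.cast_one, one_pow, Nat.factorial_one, Nat.cast_one, div_one] at h
  exact_mod_cast pos_of_mul_pos_right (one_pos.trans_le h) (exp_pos 1).le

lemma exp_one_mul_pow_mul_Bell_le (n : ℕ) {a : ℝ} (ha : 0 < a) :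
    (exp 1 * a) ^ n * (exp 1 * Bell n) ≤ exp (exp (a * n)) := by
  refine hasSum_le (fun k => ?_) ((hasSum_pow_div_factorial_Bell n).mul_left _)
    (Real.hasSum_pow_div_factorial (exp (a * n)))
  have hk : exp 1 * a * k ≤ exp (a * k) := by
    calc exp 1 * a * k = exp 1 * (a * k - 1 + 1) := by ring
      _ ≤ exp 1 * exp (a * k - 1) := by gcongr; exact add_one_le_exp _
      _ = exp (a * k) := by rw [← exp_add]; ring_nf
  calc (exp 1 * a) ^ n * ((k : ℝ) ^ n / k !) = (exp 1 * a * k) ^ n / k ! := by ring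
    _ ≤ exp (a * k) ^ n / k ! := by gcongr
    _ = exp (a * n) ^ k / k ! := by rw [← exp_nat_mul, ← exp_nat_mul]; ring_nf

lemma le_log_Bell (n : ℕ) {k : ℕ} (hk : k ≠ 0) : (n - k) * log k - 1 ≤ log (Bell n) := by
  have hterm : log ((k : ℝ) ^ n / k !) ≤ 1 + log (Bell n) := by
    rw [← log_exp 1, ← log_mul (exp_pos 1).ne' (by exact_mod_cast (Bell_pos n).ne')]
    exact log_le_log (by positivity) (pow_div_factorial_le_exp_one_mul_Bell n k)
  have hfact : log (k ! : ℝ) ≤ k * log k := by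
    rw [← log_pow]
    exact log_le_log (by positivity) (by exact_mod_cast Nat.factorial_le_pow k)
  rw [log_div (by positivity) (by positivity), log_pow] at hterm
  linarith

lemma log_Bell_le (n : ℕ) {a : ℝ} (ha : 0 < a) :
    log (Bell n) ≤ exp (a * n) - n * (1 + log a) - 1 := by
  have hB : (0 : ℝ) < Bell n := by exact_mod_cast Bell_pos n
  have h := log_le_log (by positivity) (exp_one_mul_pow_mul_Bell_le n ha)
  rw [log_mul (by positivity) (by positivity), log_pow, log_mul (by positivity) ha.ne',
    log_mul (by positivity) hB.ne', log_exp, log_exp] at h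
  linarith

lemma one_le_log_natCast {n : ℕ} (hn : 3 ≤ n) : 1 ≤ log n := by
  rw [le_log_iff_exp_le (by positivity)]
  exact exp_one_lt_three.le.trans (by exact_mod_cast hn)

lemma le_log_Bell_div {n : ℕ} (hn : 3 ≤ n) :
    log (n / (exp 1 * log n)) - (log n + 1) / n ≤ log (Bell n) / n := by
  have hL := one_le_log_natCast hn
  have hn0 : (0 : ℝ) < n := by positivity
  set L := log (n : ℝ)
  set x := (n : ℝ) / L
  have hx : 0 < x := by positivity
  set k := ⌈x⌉₊
  have hk : 0 < k := Nat.ceil_pos.mpr hx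
  have hxk : x ≤ k := Nat.le_ceil x
  have hkn : (k : ℝ) ≤ n := by exact_mod_cast Nat.ceil_le.mpr (div_le_self hn0.le hL)
  have hlogk : n * log x ≤ n * log k := by gcongr
  have hklogk : k * log k ≤ n + L :=
    calc k * log k ≤ (x + 1) * L :=
          mul_le_mul (Nat.ceil_lt_add_one hx.le).le (log_le_log (by positivity) hkn)
            (log_nonneg (by exact_mod_cast hk)) (by positivity)
      _ = n + L := by rw [add_mul, div_mul_cancel₀ _ (by positivity), one_mul]
  have hB := le_log_Bell n hk.ne'
  have hlhs : log (n / (exp 1 * L)) = log x - 1 := by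
    rw [mul_comm (exp 1), ← div_div, log_div, log_exp] <;> positivity
  calc log (n / (exp 1 * L)) - (L + 1) / n = (n * (log x - 1) - (L + 1)) / n := by
        rw [hlhs]; field_simp
    _ ≤ log (Bell n) / n := by gcongr; nlinarith

lemma log_Bell_div_le {n : ℕ} (hn : 3 ≤ n) :
    log (Bell n) / n ≤ log (n / (exp 1 * log n)) + 1 / log n - 1 / n
      - log (log (n / log n) / log n) := by
  have hL := one_le_log_natCast hn
  have hn0 : (0 : ℝ) < n := by positivity
  set L := log (n : ℝ)
  have hx : 1 < n / L := by
    rw [one_lt_div (by positivity)]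
    linarith [log_le_sub_one_of_pos hn0]
  have hlogx : 0 < log (n / L) := log_pos hx
  have hB := log_Bell_le n (a := log (n / L) / n) (by positivity)
  rw [div_mul_cancel₀ _ hn0.ne', exp_log (by positivity), log_div hlogx.ne' hn0.ne'] at hB
  calc log (Bell n) / n ≤ (n / L - n * (1 + (log (log (n / L)) - L)) - 1) / n := by gcongr
    _ = _ := by
      rw [mul_comm (exp 1), ← div_div, log_div (by positivity) (exp_pos 1).ne', log_exp,
        log_div hlogx.ne' (by positivity), log_div hn0.ne' (by positivity)]
      field_simp
      ring

lemma tendsto_log_div_log_div_log_atTop :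
    Tendsto (fun x : ℝ => log (x / log x) / log x) atTop (𝓝 1) := by
  have hsmall : Tendsto (fun x : ℝ => log (log x) / log x) atTop (𝓝 0) :=
    isLittleO_log_id_atTop.tendsto_div_nhds_zero.comp tendsto_log_atTop
  refine (by simpa using tendsto_const_nhds.sub hsmall :
    Tendsto (fun x : ℝ => 1 - log (log x) / log x) atTop (𝓝 1)).congr' ?_
  filter_upwards [eventually_gt_atTop (exp 1)] with x hx
  have hL : 1 < log x := by rwa [lt_log_iff_exp_lt ((exp_pos 1).trans hx)]
  rw [log_div ((exp_pos 1).trans hx).ne' (by positivity), sub_div, div_self (by positivity)]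

lemma tendsto_log_Bell_div_sub_log :
    Tendsto (fun n : ℕ => log (Bell n) / n - log (n / (exp 1 * log n))) atTop (𝓝 0) := by
  have hlog : Tendsto (fun x : ℝ => log x / x) atTop (𝓝 0) :=
    isLittleO_log_id_atTop.tendsto_div_nhds_zero
  have hinv : Tendsto (fun x : ℝ => 1 / x) atTop (𝓝 0) := by
    simpa only [one_div] using tendsto_inv_atTop_zero
  have hlower : Tendsto (fun x : ℝ => -((log x + 1) / x)) atTop (𝓝 0) := by
    simpa [add_div] using (hlog.add hinv).neg
  have hupper : Tendsto (fun x : ℝ => 1 / log x - 1 / x - log (log (x / log x) / log x))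
      atTop (𝓝 0) := by
    simpa using ((hinv.comp tendsto_log_atTop).sub hinv).sub
      ((continuousAt_log one_ne_zero).tendsto.comp tendsto_log_div_log_div_log_atTop)
  refine tendsto_of_tendsto_of_tendsto_of_le_of_le'
    (hlower.comp tendsto_natCast_atTop_atTop) (hupper.comp tendsto_natCast_atTop_atTop) ?_ ?_
  · filter_upwards [eventually_ge_atTop 3] with n hn
    rw [Function.comp_apply]
    linarith [le_log_Bell_div hn]
  · filter_upwards [eventually_ge_atTop 3] with n hn
    rw [Function.comp_apply]
    linarith [log_Bell_div_le hn]

theorem stmt_17 :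
    Filter.Tendsto
      (fun n : ℕ => (Bell n : ℝ) ^ ((1 : ℝ) / n) / ((1 / Real.exp 1) * (n : ℝ) / Real.log n))
      Filter.atTop (nhds 1) := by
  have h := (continuous_exp.tendsto 0).comp tendsto_log_Bell_div_sub_log
  rw [exp_zero] at h
  refine h.congr' ?_
  filter_upwards [eventually_ge_atTop 3] with n hn
  have hL := one_le_log_natCast hn
  have hB : (0 : ℝ) < Bell n := by exact_mod_cast Bell_pos n
  rw [Function.comp_apply, exp_sub, exp_log (by positivity), rpow_def_of_pos hB]
  field_simp
end
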